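/- Let R be a commutative ring, let C be a group embedded as a subgroup in groups A and B, and let G = A *_C B be the amalgamated free product (pushout in groups). Let I_A, I_B, I_C, I_G denote the augmentation ideals of RA, RB, RC, RG respectively. Then the quotient of the RG-module (I_A ⊗_{RA} RG) ⊕ (I_B ⊗_{RB} RG) by the submodule generated by all elements ((c − 1) ⊗ 1, −(c − 1) ⊗ 1) for c ∈ C is isomorphic as an RG-module to I_G. -/

import Mathlib

/-!
Shared infrastructure.  Following standard practice in Mathlib (e.g. `Rep R G`),
we work with *left* modules over the group ring `MonoidAlgebra R G`; for group
rings the categories of left and right modules are equivalent, so this is the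
usual formalization of the paper's "right `RA`-modules".
-/

universe u

namespace GP

/-- The augmentation map `RG → R`, sending each group element to `1`. -/
noncomputable def aug (R G : Type u) [CommRing R] [Group G] :
    MonoidAlgebra R G →ₐ[R] R :=
  MonoidAlgebra.lift R R G 1

/-- A projective resolution `⋯ → X n → ⋯ → X 1 → X 0 → R → 0` of the group `G`
over the commutative ring `R`: an exact sequence of projective modules over the
group ring `MonoidAlgebra R G`, with `X 0 = RG` (recorded as the isomorphism
`iso0`) and augmentation `aug R G` as the map `X 0 → R`. -/
structure Resolution (R : Type u) [CommRing R] (G : Type u) [Group G] :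
    Type (u + 1) where
  X : ℕ → Type u
  [acg : ∀ n, AddCommGroup (X n)]
  [modR : ∀ n, Module R (X n)]
  [modG : ∀ n, Module (MonoidAlgebra R G) (X n)]
  [tower : ∀ n, IsScalarTower R (MonoidAlgebra R G) (X n)]
  /-- the boundary maps -/
  d : ∀ n, X (n + 1) →ₗ[MonoidAlgebra R G] X n
  /-- every module in the resolution is projective -/
  projective : ∀ n, Module.Projective (MonoidAlgebra R G) (X n)
  /-- `X 0` is the group ring itself -/
  iso0 : X 0 ≃ₗ[MonoidAlgebra R G] MonoidAlgebra R G
  /-- exactness at `X (n+1)` -/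
  exact_succ : ∀ n, LinearMap.range (d (n + 1)) = LinearMap.ker (d n)
  /-- exactness at `X 0`, the map `X 0 → R` being the augmentation -/
  exact_zero : ∀ x : X 0, aug R G (iso0 x) = 0 ↔ x ∈ LinearMap.range (d 0)

attribute [instance] Resolution.acg Resolution.modR Resolution.modG Resolution.tower

end GP
namespace GP

universe v

section Induced

variable {S T : Type v} [Ring S] [Ring T] (φ : S →+* T)
variable (N : Type v) [AddCommMonoid N] [Module S N]

/-- The relations defining the induced module `N ⊗_S T` (for left modules,
`T ⊗_S N`): inside the free `T`-module on `N`, additivity in `N` and the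
relation `1 ⊗ (s • n) = φ s ⊗ n`. -/
noncomputable def indRels : Submodule T (N →₀ T) :=
  Submodule.span T
    ({x | ∃ n n' : N,
        x = Finsupp.single (n + n') (1 : T) - Finsupp.single n 1 - Finsupp.single n' 1} ∪
     {x | ∃ (s : S) (n : N),
        x = Finsupp.single (s • n) (1 : T) - Finsupp.single n (φ s)})

/-- The module obtained from the `S`-module `N` by induction (extension of
scalars) along `φ : S →+* T`; for group rings of a subgroup inclusion `C ≤ A`
this is the induced module `N ⊗_{RC} RA`. -/
def Induced : Type v := (N →₀ T) ⧸ indRels φ N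

noncomputable instance : AddCommGroup (Induced φ N) :=
  inferInstanceAs (AddCommGroup ((N →₀ T) ⧸ indRels φ N))

noncomputable instance : Module T (Induced φ N) :=
  inferInstanceAs (Module T ((N →₀ T) ⧸ indRels φ N))

/-- `indMk φ N n` is the element `n ⊗ 1` of the induced module. -/
noncomputable def indMk : N → Induced φ N := fun n => Submodule.Quotient.mk (Finsupp.single n 1)

variable {N} {N' : Type v} [AddCommMonoid N'] [Module S N']

/-- Functoriality of the induced module: the map `f ⊗ 1`. -/
noncomputable def indMap (f : N →ₗ[S] N') : Induced φ N →ₗ[T] Induced φ N' :=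
  Submodule.mapQ _ _ (Finsupp.lmapDomain T T f) <| by
    refine Submodule.span_le.2 ?_
    rintro x (⟨n, n', rfl⟩ | ⟨s, n, rfl⟩) <;>
      simp only [Submodule.mem_comap, map_sub, Finsupp.lmapDomain_apply,
        Finsupp.mapDomain_single, SetLike.mem_coe]
    · exact Submodule.subset_span (Or.inl ⟨f n, f n', by rw [map_add]⟩)
    · exact Submodule.subset_span (Or.inr ⟨s, f n, by rw [map_smul]⟩)

variable {M : Type v} [AddCommGroup M] [Module T M]

/-- The universal property of the induced module: an additive map `f : N → M`
into a `T`-module satisfying `f (s • n) = φ s • f n` extends uniquely to a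
`T`-linear map on the induced module. -/
noncomputable def indLift (f : N →+ M) (hf : ∀ (s : S) (n : N), f (s • n) = φ s • f n) :
    Induced φ N →ₗ[T] M :=
  Submodule.liftQ _ (Finsupp.lsum ℕ fun n => LinearMap.toSpanSingleton T M (f n)) <| by
    refine Submodule.span_le.2 ?_
    rintro x (⟨n, n', rfl⟩ | ⟨s, n, rfl⟩) <;>
      simp only [SetLike.mem_coe, LinearMap.mem_ker, map_sub, Finsupp.lsum_single,
        LinearMap.toSpanSingleton_apply, one_smul]
    · rw [f.map_add]; abel
    · rw [hf]; abel

@[simp] lemma indLift_indMk (f : N →+ M) (hf : ∀ (s : S) (n : N), f (s • n) = φ s • f n)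
    (n : N) : indLift φ f hf (indMk φ N n) = f n := by
  simp only [indLift, indMk]
  erw [Submodule.liftQ_apply, Finsupp.lsum_single, LinearMap.toSpanSingleton_apply, one_smul]

end Induced

end GP
namespace GP

universe w'

/-- `G`, together with maps `jA, jB`, is the amalgamated free product
`A *_C B`, i.e. the pushout in the category of groups of `iA : C →* A` and
`iB : C →* B`: the square commutes and the universal property holds. -/
def IsAmalgamatedProduct {C A B G : Type w'} [Group C] [Group A] [Group B] [Group G]
    (iA : C →* A) (iB : C →* B) (jA : A →* G) (jB : B →* G) : Prop :=
  jA.comp iA = jB.comp iB ∧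
  ∀ {H : Type w'} [Group H] (kA : A →* H) (kB : B →* H),
    kA.comp iA = kB.comp iB → ∃! φ : G →* H, φ.comp jA = kA ∧ φ.comp jB = kB

end GP

namespace GP

/-- The element `c - 1` of the augmentation ideal of `RA`, for `c` in (the
image in `A` of) the group `C`. -/
noncomputable def augKerElem (R : Type u) [CommRing R] {C A : Type u} [Group C] [Group A]
    (i : C →* A) (c : C) : RingHom.ker (aug R A) :=
  ⟨MonoidAlgebra.of R A (i c) - 1, by
    simp [RingHom.mem_ker, map_sub, aug, MonoidAlgebra.lift_of]⟩

end GP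

/-!
Write `M` for the quotient module and `G` for `G₀`. The maps `a ↦ (a - 1) ⊗ 1` and
`b ↦ (b - 1) ⊗ 1` are derivations `A → M` and `B → M` (along `jA`, `jB`) which agree on `C` in
`M`. Derivations along `j : H →* G` are the homomorphisms `H →* M ⋊ G` lying over `j`, so the
universal property of the pushout glues the two into a derivation `d : G → M`, and determines a
derivation on `G` by its restrictions to `A` and `B`. The derivation `d` extends to the map
`I_G → M`, `∑ r_g g ↦ ∑ r_g d g`, which is `RG`-linear by the Leibniz rule and sends `g - 1` to
`d g`. It is inverse to the map `M → I_G` induced by `I_A → I_G` and `I_B → I_G`: both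
composites fix the generators `g - 1`, for `I_G → M → I_G` by the uniqueness above.
-/

namespace GP

open MonoidAlgebra

section Augmentation

variable {R : Type u} [CommRing R] {G : Type u} [Group G]

lemma aug_single (g : G) (r : R) : aug R G (single g r) = r := by
  simp [aug, lift_single]

lemma aug_mapDomainRingHom {A : Type u} [Group A] (j : A →* G) (x : MonoidAlgebra R A) :
    aug R G (mapDomainRingHom R j x) = aug R A x := by
  induction x using MonoidAlgebra.induction_linear with
  | zero => simp
  | add x y hx hy => rw [map_add, map_add, hx, hy, map_add]
  | single a r => simp [mapDomainRingHom_apply, aug_single]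

variable (R) in
noncomputable def ofSubOne (g : G) : RingHom.ker (aug R G) :=
  ⟨of R G g - 1, by simp [RingHom.mem_ker, aug]⟩

@[simp] lemma coe_ofSubOne (g : G) : (ofSubOne R g : MonoidAlgebra R G) = of R G g - 1 := rfl

lemma augKerElem_eq_ofSubOne {C : Type u} [Group C] (i : C →* G) (c : C) :
    augKerElem R i c = ofSubOne R (i c) := rfl

lemma ofSubOne_mul (g h : G) : ofSubOne R (g * h) = ofSubOne R g + of R G g • ofSubOne R h := by
  apply Subtype.ext
  simp only [coe_ofSubOne, Submodule.coe_add, Submodule.coe_smul, smul_eq_mul, map_mul]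
  noncomm_ring

lemma span_ofSubOne :
    Submodule.span (MonoidAlgebra R G) (Set.range (ofSubOne R : G → _)) = ⊤ := by
  have hproj (y : MonoidAlgebra R G) :
      y - algebraMap R _ (aug R G y) ∈ RingHom.ker (aug R G) := by
    rw [RingHom.mem_ker, map_sub, AlgHom.commutes, Algebra.algebraMap_self, RingHom.id_apply,
      sub_self]
  have hspan (y : MonoidAlgebra R G) : (⟨_, hproj y⟩ : RingHom.ker (aug R G)) ∈
      Submodule.span (MonoidAlgebra R G) (Set.range (ofSubOne R : G → _)) := by
    induction y using MonoidAlgebra.induction_linear with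
    | zero =>
      convert (Submodule.span _ _).zero_mem
      simp
    | add x y hx hy =>
      convert add_mem hx hy using 1
      apply Subtype.ext
      simp only [map_add, Submodule.coe_add]
      exact sub_add_sub_comm _ _ _ _ |>.symm
    | single g r =>
      have hg : ofSubOne R g ∈ Submodule.span (MonoidAlgebra R G) (Set.range (ofSubOne R)) :=
        Submodule.subset_span ⟨g, rfl⟩
      convert Submodule.smul_mem _ (single 1 r) hg using 1
      apply Subtype.ext
      simp [aug_single, mul_sub, single_mul_single]
  refine eq_top_iff.2 fun x _ => ?_
  convert hspan x
  simp [RingHom.mem_ker.1 x.2]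

lemma kerAug_hom_ext {T : Type*} [Semiring T] {σ : MonoidAlgebra R G →+* T} {M : Type*}
    [AddCommMonoid M] [Module T M] {f f' : RingHom.ker (aug R G) →ₛₗ[σ] M}
    (h : ∀ g, f (ofSubOne R g) = f' (ofSubOne R g)) : f = f' :=
  LinearMap.ext_on_range span_ofSubOne h

variable {H : Type u} [Group H]

variable (R) in
noncomputable def kerAugMap (j : G →* H) :
    RingHom.ker (aug R G) →ₛₗ[mapDomainRingHom R j] RingHom.ker (aug R H) where
  toFun x := ⟨mapDomainRingHom R j x, by rw [RingHom.mem_ker, aug_mapDomainRingHom, x.2]⟩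
  map_add' x y := Subtype.ext (map_add _ _ _)
  map_smul' s x := Subtype.ext (map_mul _ _ _)

lemma kerAugMap_ofSubOne (j : G →* H) (g : G) : kerAugMap R j (ofSubOne R g) = ofSubOne R (j g) :=
  Subtype.ext <| by
    show mapDomainRingHom R j (of R G g - 1) = of R H (j g) - 1
    rw [map_sub, map_one, mapDomainRingHom_apply, of_apply, of_apply, mapDomain_single]

end Augmentation

section Induced

universe v

variable {S T : Type v} [Ring S] [Ring T] (φ : S →+* T)
  {N : Type v} [AddCommMonoid N] [Module S N]

noncomputable def indMkₛₗ : N →ₛₗ[φ] Induced φ N where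
  toFun := indMk φ N
  map_add' n n' :=
    (Submodule.Quotient.eq _).2 (Submodule.subset_span (Or.inl ⟨n, n', (sub_sub _ _ _).symm⟩))
  map_smul' s n := by
    refine (Submodule.Quotient.eq _).2 (Submodule.subset_span (Or.inr ⟨s, n, ?_⟩))
    show _ - φ s • Finsupp.single n 1 = _
    rw [Finsupp.smul_single, smul_eq_mul, mul_one]

variable {φ} {M : Type*} [AddCommGroup M] [Module T M]

lemma Induced.hom_ext {f f' : Induced φ N →ₗ[T] M}
    (h : f ∘ₛₗ indMkₛₗ φ = f' ∘ₛₗ indMkₛₗ φ) : f = f' := by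
  refine Submodule.linearMap_qext _ (Finsupp.lhom_ext' fun n => LinearMap.ext_ring ?_)
  exact DFunLike.congr_fun h n

end Induced

section Derivation

variable (R : Type u) [CommRing R] {G : Type u} [Group G] {H : Type*} [Group H]
  {M : Type*} [AddCommGroup M] [Module (MonoidAlgebra R G) M]

def IsDerivation (j : H →* G) (d : H → M) : Prop :=
  ∀ h h', d (h * h') = d h + of R G (j h) • d h'

variable {R}

lemma IsDerivation.map_one {j : H →* G} {d : H → M} (hd : IsDerivation R j d) : d 1 = 0 := by
  simpa only [mul_one, j.map_one, (of R G).map_one, one_smul, left_eq_add] using hd 1 1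

lemma isDerivation_ofSubOne : IsDerivation R (MonoidHom.id G) (ofSubOne R) :=
  ofSubOne_mul

lemma IsDerivation.linearMap_comp {j : H →* G} {d : H → M} (hd : IsDerivation R j d)
    {M' : Type*} [AddCommGroup M'] [Module (MonoidAlgebra R G) M']
    (f : M →ₗ[MonoidAlgebra R G] M') : IsDerivation R j (f ∘ d) := fun h h' => by
  simp [hd h h']

variable (R G M) in
/-- The action of `G` on `M`, written on `Multiplicative M` so that `Multiplicative M ⋊ G` is the
semidirect product `M ⋊ G`. -/
noncomputable def semidirectAction : G →* MulAut (Multiplicative M) where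
  toFun g :=
    { toFun := fun m => .ofAdd (of R G g • m.toAdd)
      invFun := fun m => .ofAdd (of R G g⁻¹ • m.toAdd)
      left_inv := fun m => by
        dsimp only
        rw [toAdd_ofAdd, smul_smul, ← map_mul, inv_mul_cancel, map_one, one_smul, ofAdd_toAdd]
      right_inv := fun m => by
        dsimp only
        rw [toAdd_ofAdd, smul_smul, ← map_mul, mul_inv_cancel, map_one, one_smul, ofAdd_toAdd]
      map_mul' := fun m m' => smul_add (of R G g) m.toAdd m'.toAdd }
  map_one' := by
    ext m
    change Multiplicative.ofAdd (of R G 1 • m.toAdd) = m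
    rw [map_one, one_smul, ofAdd_toAdd]
  map_mul' g h := by
    ext m
    change Multiplicative.ofAdd (of R G (g * h) • m.toAdd) =
      .ofAdd (of R G g • of R G h • m.toAdd)
    rw [map_mul, mul_smul]

noncomputable def IsDerivation.toSemidirect {j : H →* G} {d : H → M} (hd : IsDerivation R j d) :
    H →* Multiplicative M ⋊[semidirectAction R G M] G where
  toFun h := ⟨.ofAdd (d h), j h⟩
  map_one' := by
    ext
    · exact congrArg Multiplicative.ofAdd hd.map_one
    · exact j.map_one
  map_mul' h h' := by
    ext
    · exact congrArg Multiplicative.ofAdd (hd h h')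
    · exact j.map_mul h h'

variable (R) in
lemma isDerivation_left_of_right_eq {ψ : G →* Multiplicative M ⋊[semidirectAction R G M] G}
    (hψ : ∀ g, (ψ g).right = g) : IsDerivation R (MonoidHom.id G) fun g => (ψ g).left.toAdd :=
  fun g h => by
    show (ψ (g * h)).left.toAdd = (ψ g).left.toAdd + of R G g • (ψ h).left.toAdd
    rw [ψ.map_mul, SemidirectProduct.mul_left, hψ]
    rfl

variable (R) in
noncomputable def derivSum (d : G → M) : MonoidAlgebra R G →+ M :=
  (Finsupp.liftAddHom fun g => (LinearMap.toSpanSingleton _ M (d g)).toAddMonoidHom.comp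
      (singleAddHom (R := R) (1 : G))).comp coeffAddEquiv.toAddMonoidHom

@[simp] lemma derivSum_single (d : G → M) (g : G) (r : R) :
    derivSum R d (single g r) = single (1 : G) r • d g :=
  Finsupp.liftAddHom_apply_single _ g r

lemma IsDerivation.derivSum_mul {d : G → M} (hd : IsDerivation R (MonoidHom.id G) d)
    (s x : MonoidAlgebra R G) :
    derivSum R d (s * x) =
      s • derivSum R d x + single (1 : G) (aug R G x) • derivSum R d s := by
  induction s using MonoidAlgebra.induction_linear with
  | zero => simp only [zero_mul, map_zero, zero_smul, smul_zero, add_zero]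
  | add s s' hs hs' => rw [add_mul, map_add, hs, hs', map_add, add_smul, smul_add]; abel
  | single g r =>
    induction x using MonoidAlgebra.induction_linear with
    | zero => simp only [mul_zero, map_zero, smul_zero, single_zero, zero_smul, add_zero]
    | add x x' hx hx' =>
      rw [mul_add, map_add, hx, hx', map_add, map_add, single_add, add_smul, smul_add]; abel
    | single h t =>
      have hcomm : single 1 (r * t) * of R G g = single g r * single 1 t := by
        rw [of_apply, single_mul_single, single_mul_single, one_mul, mul_one, mul_one]
      rw [single_mul_single, derivSum_single, derivSum_single, derivSum_single, aug_single, hd,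
        MonoidHom.id_apply, smul_add, smul_smul, hcomm, mul_smul, smul_smul (single 1 t),
        single_mul_single, mul_one, mul_comm t]
      exact add_comm _ _

noncomputable def IsDerivation.liftKerAug {d : G → M} (hd : IsDerivation R (MonoidHom.id G) d) :
    RingHom.ker (aug R G) →ₗ[MonoidAlgebra R G] M where
  toFun x := derivSum R d x
  map_add' x y := map_add _ _ _
  map_smul' s x := by
    show derivSum R d (s * x) = s • derivSum R d x
    rw [hd.derivSum_mul, RingHom.mem_ker.1 x.2,
      single_zero, zero_smul, add_zero]

lemma IsDerivation.liftKerAug_ofSubOne {d : G → M} (hd : IsDerivation R (MonoidHom.id G) d)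
    (g : G) : hd.liftKerAug (ofSubOne R g) = d g := by
  show derivSum R d (of R G g - 1) = d g
  rw [map_sub, of_apply, one_def, derivSum_single, derivSum_single, hd.map_one, smul_zero,
    sub_zero, ← one_def, one_smul]

end Derivation

section Pushout

variable {C A B G : Type u} [Group C] [Group A] [Group B] [Group G]
  {iA : C →* A} {iB : C →* B} {jA : A →* G} {jB : B →* G}

lemma IsAmalgamatedProduct.hom_ext (hpush : IsAmalgamatedProduct iA iB jA jB) {K : Type u}
    [Group K] {f f' : G →* K} (hA : f.comp jA = f'.comp jA) (hB : f.comp jB = f'.comp jB) :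
    f = f' := by
  obtain ⟨θ, -, huniq⟩ :=
    hpush.2 (f.comp jA) (f.comp jB) (by rw [MonoidHom.comp_assoc, MonoidHom.comp_assoc, hpush.1])
  exact (huniq f ⟨rfl, rfl⟩).trans (huniq f' ⟨hA.symm, hB.symm⟩).symm

variable {R : Type u} [CommRing R] {M : Type u} [AddCommGroup M] [Module (MonoidAlgebra R G) M]

lemma IsAmalgamatedProduct.isDerivation_ext (hpush : IsAmalgamatedProduct iA iB jA jB)
    {d d' : G → M} (hd : IsDerivation R (MonoidHom.id G) d)
    (hd' : IsDerivation R (MonoidHom.id G) d') (hA : ∀ a, d (jA a) = d' (jA a))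
    (hB : ∀ b, d (jB b) = d' (jB b)) : d = d' := by
  have h := hpush.hom_ext (f := hd.toSemidirect) (f' := hd'.toSemidirect)
    (MonoidHom.ext fun a => SemidirectProduct.ext (congrArg Multiplicative.ofAdd (hA a)) rfl)
    (MonoidHom.ext fun b => SemidirectProduct.ext (congrArg Multiplicative.ofAdd (hB b)) rfl)
  exact funext fun g => congrArg (fun x => x.left.toAdd) (DFunLike.congr_fun h g)

lemma IsAmalgamatedProduct.exists_isDerivation (hpush : IsAmalgamatedProduct iA iB jA jB)
    {dA : A → M} {dB : B → M} (hdA : IsDerivation R jA dA) (hdB : IsDerivation R jB dB)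
    (hC : ∀ c, dA (iA c) = dB (iB c)) :
    ∃ d : G → M, IsDerivation R (MonoidHom.id G) d ∧ (∀ a, d (jA a) = dA a) ∧
      ∀ b, d (jB b) = dB b := by
  obtain ⟨ψ, ⟨hψA, hψB⟩, -⟩ := hpush.2 hdA.toSemidirect hdB.toSemidirect <|
    MonoidHom.ext fun c =>
      SemidirectProduct.ext (congrArg Multiplicative.ofAdd (hC c)) (DFunLike.congr_fun hpush.1 c)
  have hright : SemidirectProduct.rightHom.comp ψ = MonoidHom.id G := by
    refine hpush.hom_ext ?_ ?_
    · rw [MonoidHom.comp_assoc, hψA]; rfl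
    · rw [MonoidHom.comp_assoc, hψB]; rfl
  refine ⟨fun g => (ψ g).left.toAdd, isDerivation_left_of_right_eq R (DFunLike.congr_fun hright),
    fun a => ?_, fun b => ?_⟩
  · exact congrArg (fun x => x.left.toAdd) (DFunLike.congr_fun hψA a)
  · exact congrArg (fun x => x.left.toAdd) (DFunLike.congr_fun hψB b)

end Pushout

section Amalgam

variable (R : Type u) [CommRing R] {C A B G : Type u} [Group C] [Group A] [Group B] [Group G]

abbrev InducedAug {H : Type u} [Group H] (j : H →* G) : Type u :=
  Induced (mapDomainRingHom R j) (RingHom.ker (aug R H))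

lemma isDerivation_indMk_ofSubOne {H : Type u} [Group H] (j : H →* G) :
    IsDerivation R j (indMk (mapDomainRingHom R j) _ ∘ ofSubOne R) := fun h h' => by
  have h_of : mapDomainRingHom R j (of R H h) = of R G (j h) := by
    rw [mapDomainRingHom_apply, of_apply, of_apply, mapDomain_single]
  change indMkₛₗ _ (ofSubOne R (h * h')) =
    indMkₛₗ _ (ofSubOne R h) + of R G (j h) • indMkₛₗ _ (ofSubOne R h')
  rw [ofSubOne_mul, map_add, LinearMap.map_smulₛₗ, h_of]

noncomputable def inducedAugToKerAug {H : Type u} [Group H] (j : H →* G) :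
    InducedAug R j →ₗ[MonoidAlgebra R G] RingHom.ker (aug R G) :=
  indLift _ (kerAugMap R j).toAddMonoidHom (kerAugMap R j).map_smulₛₗ

lemma inducedAugToKerAug_indMk {H : Type u} [Group H] (j : H →* G) (n : RingHom.ker (aug R H)) :
    inducedAugToKerAug R j (indMk _ _ n) = kerAugMap R j n :=
  indLift_indMk ..

variable (iA : C →* A) (iB : C →* B) (jA : A →* G) (jB : B →* G)

noncomputable def amalgamRel : Submodule (MonoidAlgebra R G) (InducedAug R jA × InducedAug R jB) :=
  Submodule.span (MonoidAlgebra R G)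
    {x | ∃ c : C,
      x = (indMk (mapDomainRingHom R jA) (RingHom.ker (aug R A)) (augKerElem R iA c),
           - indMk (mapDomainRingHom R jB) (RingHom.ker (aug R B)) (augKerElem R iB c))}

abbrev AmalgamQuotient : Type u :=
  (InducedAug R jA × InducedAug R jB) ⧸ amalgamRel R iA iB jA jB

noncomputable def amalgamDerivA (a : A) : AmalgamQuotient R iA iB jA jB :=
  Submodule.Quotient.mk (indMk _ _ (ofSubOne R a), 0)

noncomputable def amalgamDerivB (b : B) : AmalgamQuotient R iA iB jA jB :=
  Submodule.Quotient.mk (0, indMk _ _ (ofSubOne R b))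

lemma isDerivation_amalgamDerivA : IsDerivation R jA (amalgamDerivA R iA iB jA jB) :=
  (isDerivation_indMk_ofSubOne R jA).linearMap_comp
    ((amalgamRel R iA iB jA jB).mkQ ∘ₗ LinearMap.inl _ _ _)

lemma isDerivation_amalgamDerivB : IsDerivation R jB (amalgamDerivB R iA iB jA jB) :=
  (isDerivation_indMk_ofSubOne R jB).linearMap_comp
    ((amalgamRel R iA iB jA jB).mkQ ∘ₗ LinearMap.inr _ _ _)

lemma amalgamDerivA_eq_amalgamDerivB (c : C) :
    amalgamDerivA R iA iB jA jB (iA c) = amalgamDerivB R iA iB jA jB (iB c) :=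
  (Submodule.Quotient.eq _).2 <| Submodule.subset_span
    ⟨c, by ext <;> simp [augKerElem_eq_ofSubOne]⟩

noncomputable def amalgamToKerAug (hcomm : jA.comp iA = jB.comp iB) :
    AmalgamQuotient R iA iB jA jB →ₗ[MonoidAlgebra R G] RingHom.ker (aug R G) :=
  (amalgamRel R iA iB jA jB).liftQ
    ((inducedAugToKerAug R jA).coprod (inducedAugToKerAug R jB)) <| by
    refine Submodule.span_le.2 ?_
    rintro _ ⟨c, rfl⟩
    rw [SetLike.mem_coe, LinearMap.mem_ker, LinearMap.coprod_apply, map_neg,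
      inducedAugToKerAug_indMk, inducedAugToKerAug_indMk, augKerElem_eq_ofSubOne,
      augKerElem_eq_ofSubOne, kerAugMap_ofSubOne, kerAugMap_ofSubOne,
      show jA (iA c) = jB (iB c) from DFunLike.congr_fun hcomm c, add_neg_cancel]

lemma amalgamToKerAug_amalgamDerivA (hcomm : jA.comp iA = jB.comp iB) (a : A) :
    amalgamToKerAug R iA iB jA jB hcomm (amalgamDerivA R iA iB jA jB a) = ofSubOne R (jA a) := by
  show inducedAugToKerAug R jA (indMk _ _ (ofSubOne R a)) + inducedAugToKerAug R jB 0 = _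
  rw [map_zero, add_zero, inducedAugToKerAug_indMk, kerAugMap_ofSubOne]

lemma amalgamToKerAug_amalgamDerivB (hcomm : jA.comp iA = jB.comp iB) (b : B) :
    amalgamToKerAug R iA iB jA jB hcomm (amalgamDerivB R iA iB jA jB b) = ofSubOne R (jB b) := by
  show inducedAugToKerAug R jA 0 + inducedAugToKerAug R jB (indMk _ _ (ofSubOne R b)) = _
  rw [map_zero, zero_add, inducedAugToKerAug_indMk, kerAugMap_ofSubOne]

variable {R iA iB jA jB}

lemma amalgamToKerAug_comp_liftKerAug (hpush : IsAmalgamatedProduct iA iB jA jB) {d : G → _}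
    (hd : IsDerivation R (MonoidHom.id G) d) (hdA : ∀ a, d (jA a) = amalgamDerivA R iA iB jA jB a)
    (hdB : ∀ b, d (jB b) = amalgamDerivB R iA iB jA jB b) :
    amalgamToKerAug R iA iB jA jB hpush.1 ∘ₗ hd.liftKerAug = LinearMap.id := by
  have hΦd : amalgamToKerAug R iA iB jA jB hpush.1 ∘ d = ofSubOne R :=
    hpush.isDerivation_ext (hd.linearMap_comp _) isDerivation_ofSubOne
      (fun a => by rw [Function.comp_apply, hdA, amalgamToKerAug_amalgamDerivA])
      (fun b => by rw [Function.comp_apply, hdB, amalgamToKerAug_amalgamDerivB])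
  refine kerAug_hom_ext fun g => ?_
  rw [LinearMap.comp_apply, hd.liftKerAug_ofSubOne]
  exact congrFun hΦd g

lemma liftKerAug_comp_amalgamToKerAug (hcomm : jA.comp iA = jB.comp iB) {d : G → _}
    (hd : IsDerivation R (MonoidHom.id G) d) (hdA : ∀ a, d (jA a) = amalgamDerivA R iA iB jA jB a)
    (hdB : ∀ b, d (jB b) = amalgamDerivB R iA iB jA jB b) :
    hd.liftKerAug ∘ₗ amalgamToKerAug R iA iB jA jB hcomm = LinearMap.id := by
  refine Submodule.linearMap_qext _ (LinearMap.prod_ext ?_ ?_) <;>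
    refine Induced.hom_ext (kerAug_hom_ext fun g => ?_)
  · show hd.liftKerAug (amalgamToKerAug R iA iB jA jB hcomm (amalgamDerivA R iA iB jA jB g)) = _
    rw [amalgamToKerAug_amalgamDerivA, hd.liftKerAug_ofSubOne, hdA]
    rfl
  · show hd.liftKerAug (amalgamToKerAug R iA iB jA jB hcomm (amalgamDerivB R iA iB jA jB g)) = _
    rw [amalgamToKerAug_amalgamDerivB, hd.liftKerAug_ofSubOne, hdB]
    rfl

end Amalgam

end GP

open GP

theorem augmentation_ideal_of_amalgam_general
    {R : Type u} [CommRing R]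
    {C A B G₀ : Type u} [Group C] [Group A] [Group B] [Group G₀]
    (iA : C →* A) (iB : C →* B) (jA : A →* G₀) (jB : B →* G₀)
    (hpush : IsAmalgamatedProduct iA iB jA jB) :
    Nonempty
      (((Induced (MonoidAlgebra.mapDomainRingHom R jA) (RingHom.ker (aug R A)) ×
         Induced (MonoidAlgebra.mapDomainRingHom R jB) (RingHom.ker (aug R B))) ⧸
        Submodule.span (MonoidAlgebra R G₀)
          {x | ∃ c : C,
            x = (indMk (MonoidAlgebra.mapDomainRingHom R jA) (RingHom.ker (aug R A))
                   (augKerElem R iA c),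
                 - indMk (MonoidAlgebra.mapDomainRingHom R jB) (RingHom.ker (aug R B))
                   (augKerElem R iB c))})
        ≃ₗ[MonoidAlgebra R G₀] RingHom.ker (aug R G₀)) := by
  obtain ⟨d, hd, hdA, hdB⟩ := hpush.exists_isDerivation
    (isDerivation_amalgamDerivA R iA iB jA jB) (isDerivation_amalgamDerivB R iA iB jA jB)
    (amalgamDerivA_eq_amalgamDerivB R iA iB jA jB)
  exact ⟨.ofLinearMap (amalgamToKerAug R iA iB jA jB hpush.1) hd.liftKerAug
    (amalgamToKerAug_comp_liftKerAug hpush hd hdA hdB)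
    (liftKerAug_comp_amalgamToKerAug hpush.1 hd hdA hdB)⟩

theorem augmentation_ideal_of_amalgam
    {R : Type u} [CommRing R]
    {C A B G₀ : Type u} [Group C] [Group A] [Group B] [Group G₀]
    (iA : C →* A) (iB : C →* B) (jA : A →* G₀) (jB : B →* G₀)
    (hiA : Function.Injective iA) (hiB : Function.Injective iB)
    (hpush : IsAmalgamatedProduct iA iB jA jB) :
    Nonempty
      (((Induced (MonoidAlgebra.mapDomainRingHom R jA) (RingHom.ker (aug R A)) ×
         Induced (MonoidAlgebra.mapDomainRingHom R jB) (RingHom.ker (aug R B))) ⧸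
        Submodule.span (MonoidAlgebra R G₀)
          {x | ∃ c : C,
            x = (indMk (MonoidAlgebra.mapDomainRingHom R jA) (RingHom.ker (aug R A))
                   (augKerElem R iA c),
                 - indMk (MonoidAlgebra.mapDomainRingHom R jB) (RingHom.ker (aug R B))
                   (augKerElem R iB c))})
        ≃ₗ[MonoidAlgebra R G₀] RingHom.ker (aug R G₀)) :=
  augmentation_ideal_of_amalgam_general iA iB jA jB hpush
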